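/- Let x = α₁α₂…αₜ be a balanced word over {a,b} (i.e., φ(x) = 0, where φ(a)=2, φ(b)=−2), and let n ≥ 1. Let y = α₁ⁿα₂ⁿ…αₜⁿ be the word obtained by repeating each letter of x exactly n times in place. Then w(y) = n²·w(x), where w denotes the sum of φ over all nonempty prefixes. -/

import Mathlib

/-!
Cutting a word after its first letter gives `wd (c :: u) = (|u| + 1) φ(c) + wd u`, i.e. each
letter is counted once in every prefix containing it. In `y` the block `cⁿ` of the `i`-th letter
of `x` is followed by `n(t - i)` letters, so it contributes `n²(t - i) φ(c) - C(n, 2) φ(c)`, the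
correction coming from the letters of the block itself. Summing over the letters,
`wd y = n² wd x - C(n, 2) φ(x)`, and the correction vanishes for balanced `x`.
-/

/-- A word over the alphabet {a,b} is a list of booleans: `true` = a, `false` = b. -/
abbrev Word := List Bool

/-- φ(a) = 2, φ(b) = -2, extended additively to words. -/
def phi (y : Word) : ℤ := (y.map (fun c => if c then (2 : ℤ) else -2)).sum

/-- The width of a word: the sum of φ over all nonempty prefixes. -/
def wd (y : Word) : ℤ := ∑ i ∈ Finset.range y.length, phi (y.take (i + 1))

lemma phi_append (u v : Word) : phi (u ++ v) = phi u + phi v := by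
  simp [phi]

lemma phi_cons (c : Bool) (u : Word) : phi (c :: u) = phi [c] + phi u :=
  phi_append [c] u

lemma phi_replicate (n : ℕ) (c : Bool) : phi (List.replicate n c) = n * phi [c] := by
  simp [phi]

lemma wd_append (u v : Word) : wd (u ++ v) = wd u + v.length * phi u + wd v := by
  have prefix_within_left : ∀ i ∈ Finset.range u.length,
      phi ((u ++ v).take (i + 1)) = phi (u.take (i + 1)) := fun i hi => by
    rw [List.take_append_of_le_length (by simp at hi; omega)]
  have prefix_past_left : ∀ i ∈ Finset.range v.length,
      phi ((u ++ v).take (u.length + i + 1)) = phi u + phi (v.take (i + 1)) := fun i _ => by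
    rw [add_assoc, List.take_length_add_append, phi_append]
  rw [wd, List.length_append, Finset.sum_range_add, Finset.sum_congr rfl prefix_within_left,
    Finset.sum_congr rfl prefix_past_left, Finset.sum_add_distrib, Finset.sum_const,
    Finset.card_range, nsmul_eq_mul, wd, wd]
  ring

lemma wd_cons (c : Bool) (u : Word) : wd (c :: u) = (u.length + 1) * phi [c] + wd u := by
  have wd_singleton : wd [c] = phi [c] := by simp [wd]
  rw [← List.singleton_append, wd_append, wd_singleton]
  ring

lemma wd_replicate (n : ℕ) (c : Bool) :
    wd (List.replicate n c) = (n + 1).choose 2 * phi [c] := by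
  induction n with
  | zero => simp [wd]
  | succ n ih =>
    rw [List.replicate_succ, wd_cons, ih, List.length_replicate, Nat.choose_succ_succ (n + 1),
      Nat.choose_one_right]
    push_cast
    ring

lemma Nat.choose_succ_two_add_choose_two (n : ℕ) : (n + 1).choose 2 + n.choose 2 = n ^ 2 := by
  induction n with
  | zero => rfl
  | succ n ih =>
    have h₁ := Nat.choose_succ_succ' (n + 1) 1
    have h₂ := Nat.choose_succ_succ' n 1
    simp only [Nat.choose_one_right] at h₁ h₂
    nlinarith [ih]

lemma List.length_flatMap_replicate {α : Type*} (l : List α) (n : ℕ) :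
    (l.flatMap (List.replicate n)).length = n * l.length := by
  simp [List.length_flatMap, mul_comm]

lemma wd_flatMap_replicate (x : Word) (n : ℕ) :
    wd (x.flatMap (List.replicate n)) = n ^ 2 * wd x - n.choose 2 * phi x := by
  induction x with
  | nil => simp [wd, phi]
  | cons c x ih =>
    have hchoose : ((n + 1).choose 2 : ℤ) = n ^ 2 - n.choose 2 := by
      rw [eq_sub_iff_add_eq]
      exact_mod_cast Nat.choose_succ_two_add_choose_two n
    rw [List.flatMap_cons, wd_append, wd_replicate, phi_replicate, ih, List.length_flatMap_replicate,
      wd_cons, phi_cons c x, hchoose]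
    push_cast
    ring

theorem width_repeat_balanced_general (x : Word) (n : ℕ) (hx : phi x = 0) :
    wd (x.flatMap (fun c => List.replicate n c)) = (n : ℤ) ^ 2 * wd x := by
  simpa [hx] using wd_flatMap_replicate x n

theorem width_repeat_balanced (x : Word) (n : ℕ) (hn : 1 ≤ n) (hx : phi x = 0) :
    wd (x.flatMap (fun c => List.replicate n c)) = (n : ℤ) ^ 2 * wd x :=
  width_repeat_balanced_general x n hx
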